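/- Let g be a bijection of a set X preserving two subsets ℓ₁, ℓ₂ identified with circles on which g acts with topological rotation numbers ρ₁, ρ₂ ∈ ℝ/ℤ. Suppose there is a group G of bijections of X containing g and a one-cocycle K : G → (X → ℝ)/ℝ whose associated two-cocycles G_{x₁}, G_{x₂} at points x₁ ∈ ℓ₁, x₂ ∈ ℓ₂ are bounded on ⟨g⟩ with local rotation numbers r₁ = k₁ρ₁ and r₂ = k₂ρ₂ for nonzero integers k₁, k₂ (periods of an integral cocycle on ℓᵢ). If g is distorted, then r₁ = r₂ in ℝ/ℤ, hence k₁ρ₁ = k₂ρ₂ in ℚ/ℤ when the rotation numbers are as above. -/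

import Mathlib

/-!
The difference `q f = K f x₂ - K f x₁` of the cocycle at the two points changes by at most
`2 ‖K t‖` under left multiplication by `t`, because the constants of the cocycle identity
cancel. Hence `|q h| ≤ |q 1| + C · |h|_S` for the word norm of a finite generating set `S`, so
`q (gⁿ) / n → 0` when `g` is distorted. Integrality writes `q (gⁿ) / n` as
`s + b₁ n / n - b₂ n / n`, with limit `s + r₁ - r₂`; thus `r₁ - r₂ = -s`.
-/

/-- The word norm of `g` with respect to a generating set `S`. -/
noncomputable def wordLength {G : Type*} [Group G] (S : Set G) (g : G) : ℕ :=
  sInf {k : ℕ | ∃ l : List G,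
    l.length = k ∧ (∀ s ∈ l, s ∈ S ∨ s⁻¹ ∈ S) ∧ l.prod = g}

open Filter Topology

section WordLength

variable {G : Type*} [Group G]

theorem exists_list_length_eq_wordLength {S : Set G} {h : G}
    (hh : h ∈ Subgroup.closure S) :
    ∃ l : List G,
      l.length = wordLength S h ∧ (∀ s ∈ l, s ∈ S ∨ s⁻¹ ∈ S) ∧ l.prod = h := by
  have hmem : h ∈ Submonoid.closure (S ∪ S⁻¹) := by
    rwa [← Subgroup.closure_toSubmonoid]
  obtain ⟨l, hlS, hl⟩ := Submonoid.exists_list_of_mem_closure hmem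
  exact Nat.sInf_mem
    (s := {k | ∃ l : List G,
      l.length = k ∧ (∀ s ∈ l, s ∈ S ∨ s⁻¹ ∈ S) ∧ l.prod = h})
    ⟨l.length, l, rfl, hlS, hl⟩

variable {S : Set G} {φ : G → ℝ} {C : ℝ}

theorem abs_sub_le_mul_length_of_abs_mul_sub_le
    (hφ : ∀ t, t ∈ S ∨ t⁻¹ ∈ S → ∀ f, |φ (t * f) - φ f| ≤ C)
    (l : List G) (hl : ∀ t ∈ l, t ∈ S ∨ t⁻¹ ∈ S) :
    |φ l.prod - φ 1| ≤ C * l.length := by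
  induction l with
  | nil => simp
  | cons t l ih =>
    have hstep := hφ t (hl t List.mem_cons_self) l.prod
    have hrest := ih fun u hu => hl u (List.mem_cons_of_mem _ hu)
    calc |φ (t :: l).prod - φ 1|
        ≤ |φ (t * l.prod) - φ l.prod| + |φ l.prod - φ 1| := by
          rw [List.prod_cons]; exact abs_sub_le _ _ _
      _ ≤ C * (t :: l).length := by
          push_cast [List.length_cons]; linarith

theorem abs_le_abs_one_add_mul_wordLength
    (hφ : ∀ t, t ∈ S ∨ t⁻¹ ∈ S → ∀ f, |φ (t * f) - φ f| ≤ C)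
    {h : G} (hh : h ∈ Subgroup.closure S) :
    |φ h| ≤ |φ 1| + C * wordLength S h := by
  obtain ⟨l, hlen, hlS, rfl⟩ := exists_list_length_eq_wordLength hh
  have := abs_sub_le_mul_length_of_abs_mul_sub_le hφ l hlS
  rw [← hlen]
  linarith [abs_sub_abs_le_abs_sub (φ l.prod) (φ 1)]

theorem tendsto_div_atTop_zero_of_wordLength_pow
    (hφ : ∀ t, t ∈ S ∨ t⁻¹ ∈ S → ∀ f, |φ (t * f) - φ f| ≤ C)
    {g : G} (hg : g ∈ Subgroup.closure S)
    (hdist : Tendsto (fun n : ℕ => (wordLength S (g ^ n) : ℝ) / n) atTop (𝓝 0)) :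
    Tendsto (fun n : ℕ => φ (g ^ n) / n) atTop (𝓝 0) := by
  have hbound : Tendsto (fun n : ℕ => |φ 1| / n + C * ((wordLength S (g ^ n) : ℝ) / n))
      atTop (𝓝 0) := by
    simpa using (tendsto_const_div_atTop_nhds_zero_nat |φ 1|).add (hdist.const_mul C)
  refine squeeze_zero_norm (fun n => ?_) hbound
  rw [Real.norm_eq_abs, abs_div, Nat.abs_cast, mul_div_assoc', ← add_div]
  gcongr
  exact abs_le_abs_one_add_mul_wordLength hφ (pow_mem hg n)

end WordLength

section Cocycle

variable {G X : Type*} [Group G] [TopologicalSpace X] [CompactSpace X]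

theorem abs_cocycle_sub_mul_sub_le (act : G → X → X) (K : G → C(X, ℝ))
    (hK : ∀ f g : G, ∃ c : ℝ, ∀ x : X, K (f * g) x = K f (act g x) + K g x + c)
    (x₁ x₂ : X) (t f : G) :
    |(K (t * f) x₂ - K (t * f) x₁) - (K f x₂ - K f x₁)| ≤ 2 * ‖K t‖ := by
  obtain ⟨c, hc⟩ := hK t f
  calc |(K (t * f) x₂ - K (t * f) x₁) - (K f x₂ - K f x₁)|
      = |K t (act f x₂) - K t (act f x₁)| := by rw [hc, hc]; ring_nf
    _ ≤ |K t (act f x₂)| + |K t (act f x₁)| := abs_sub _ _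
    _ ≤ ‖K t‖ + ‖K t‖ := by
        gcongr <;> exact (K t).norm_coe_le_norm _
    _ = 2 * ‖K t‖ := by ring

end Cocycle

theorem le_sum_add_inv_of_mem_or_inv_mem {G : Type*} [Group G] (F : G → ℝ)
    (hF : ∀ u, 0 ≤ F u) {S : Finset G} {t : G} (ht : t ∈ S ∨ t⁻¹ ∈ S) :
    F t ≤ ∑ u ∈ S, (F u + F u⁻¹) := by
  have hnn : ∀ u ∈ S, 0 ≤ F u + F u⁻¹ := fun u _ => add_nonneg (hF u) (hF u⁻¹)
  rcases ht with ht | ht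
  · exact (le_add_of_nonneg_right (hF t⁻¹)).trans (Finset.single_le_sum hnn ht)
  · have := Finset.single_le_sum hnn ht
    rw [inv_inv] at this
    linarith [hF t⁻¹]

theorem tendsto_natCast_mul_add_div {u : ℕ → ℝ} {L : ℝ} (s : ℝ)
    (hu : Tendsto (fun n : ℕ => u n / n) atTop (𝓝 L)) :
    Tendsto (fun n : ℕ => (n * s + u n) / n) atTop (𝓝 (s + L)) := by
  refine (tendsto_const_nhds.add hu).congr' ?_
  filter_upwards [eventually_ne_atTop 0] with n hn
  have : (n : ℝ) ≠ 0 := Nat.cast_ne_zero.mpr hn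
  field_simp

theorem distorted_implies_equal_local_rotation_numbers_general
    {G X : Type*} [Group G] [TopologicalSpace X] [CompactSpace X]
    (act : G → X ≃ₜ X)
    (K : G → C(X, ℝ))
    (hK : ∀ f g : G, ∃ c : ℝ, ∀ x : X,
      K (f * g) x = K f (act g x) + K g x + c)
    (g : G) (x₁ x₂ : X)
    (b₁ b₂ : ℤ → ℝ) (r₁ r₂ : ℝ)
    -- the local rotation numbers at `x₁` and `x₂`
    (hr₁ : Filter.Tendsto (fun n : ℕ => b₁ n / n) Filter.atTop (nhds r₁))
    (hr₂ : Filter.Tendsto (fun n : ℕ => b₂ n / n) Filter.atTop (nhds r₂))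
    (k₁ k₂ : ℤ) (ρ₁ ρ₂ : ℝ)
    (hrho₁ : r₁ = (k₁ : ℝ) * ρ₁) (hrho₂ : r₂ = (k₂ : ℝ) * ρ₂)
    -- integrality: `q(gⁿ) = n·s + b₁(n) − b₂(n)` for an integer `s`
    (hint : ∃ s : ℤ, ∀ n : ℤ,
      K (g ^ n) x₂ - K (g ^ n) x₁ = (n : ℝ) * (s : ℝ) + (b₁ n - b₂ n))
    -- `g` is distorted
    (hdist : ∃ S : Finset G, g ∈ Subgroup.closure (S : Set G) ∧
      Filter.Tendsto (fun n : ℕ => (wordLength (S : Set G) (g ^ n) : ℝ) / n)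
        Filter.atTop (nhds 0)) :
    ∃ m : ℤ, r₁ - r₂ = (m : ℝ) ∧ (k₁ : ℝ) * ρ₁ - (k₂ : ℝ) * ρ₂ = (m : ℝ) := by
  obtain ⟨s, hs⟩ := hint
  obtain ⟨S, hgS, hwl⟩ := hdist
  set q : G → ℝ := fun f => K f x₂ - K f x₁
  have hq : ∀ t, t ∈ (S : Set G) ∨ t⁻¹ ∈ (S : Set G) → ∀ f, |q (t * f) - q f| ≤
      2 * ∑ u ∈ S, (‖K u‖ + ‖K u⁻¹‖) := fun t ht f =>
    (abs_cocycle_sub_mul_sub_le (fun f => act f) K hK x₁ x₂ t f).trans <| by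
      gcongr
      exact le_sum_add_inv_of_mem_or_inv_mem (fun u => ‖K u‖) (fun _ => norm_nonneg _) ht
  have hq_zero : Tendsto (fun n : ℕ => q (g ^ n) / n) atTop (𝓝 0) :=
    tendsto_div_atTop_zero_of_wordLength_pow hq hgS hwl
  have hq_lim : Tendsto (fun n : ℕ => q (g ^ n) / n) atTop (𝓝 (s + (r₁ - r₂))) := by
    have hb : Tendsto (fun n : ℕ => (b₁ n - b₂ n) / n) atTop (𝓝 (r₁ - r₂)) := by
      simpa only [sub_div] using hr₁.sub hr₂
    simpa only [q, ← zpow_natCast, hs, Int.cast_natCast] using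
      tendsto_natCast_mul_add_div s hb
  have hr : r₁ - r₂ = -s := by linarith [tendsto_nhds_unique hq_lim hq_zero]
  exact ⟨-s, by rw [hr, Int.cast_neg], by rw [← hrho₁, ← hrho₂, hr, Int.cast_neg]⟩

/-- Let `g` be a homeomorphism of a compact space `X` (an element of a
group `G` acting on `X` by homeomorphisms) preserving two circles
`ℓ₁, ℓ₂` on which it acts with topological rotation numbers `ρ₁, ρ₂`.
Let `K : G → C⁰(X;ℝ)/ℝ` be a one-cocycle whose associated two-cocycles
`G_{x₁}, G_{x₂}` at `x₁ ∈ ℓ₁, x₂ ∈ ℓ₂` are bounded on `⟨g⟩` with local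
rotation numbers `r₁ = k₁ρ₁`, `r₂ = k₂ρ₂` (`k₁, k₂` nonzero integers,
the periods of an integral cocycle on the `ℓᵢ`); the local rotation
number `rᵢ` is computed as `lim bᵢ(gⁿ)/n` for a primitive `bᵢ` of
`G_{xᵢ}` on `⟨g⟩`, and integrality gives `q(gⁿ) = n·s + b₁(gⁿ) − b₂(gⁿ)`
for an integer `s`.  If `g` is distorted, then `r₁ = r₂` in `ℝ/ℤ`, hence
`k₁ρ₁ = k₂ρ₂` in `ℚ/ℤ`. -/
theorem distorted_implies_equal_local_rotation_numbers
    {G X : Type*} [Group G] [TopologicalSpace X] [CompactSpace X]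
    (act : G → X ≃ₜ X)
    (hactone : act 1 = Homeomorph.refl X)
    (hactmul : ∀ f g : G, ∀ x : X, act (f * g) x = act f (act g x))
    (K : G → C(X, ℝ))
    (hK : ∀ f g : G, ∃ c : ℝ, ∀ x : X,
      K (f * g) x = K f (act g x) + K g x + c)
    (g : G) (x₁ x₂ : X)
    -- boundedness of `G_{x₁}` and `G_{x₂}` on the cyclic subgroup `⟨g⟩`
    (hbound₁ : ∃ C : ℝ, ∀ m n : ℤ,
      |K (g ^ m) (act (g ^ n) x₁) - K (g ^ m) x₁| ≤ C)
    (hbound₂ : ∃ C : ℝ, ∀ m n : ℤ,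
      |K (g ^ m) (act (g ^ n) x₂) - K (g ^ m) x₂| ≤ C)
    (b₁ b₂ : ℤ → ℝ) (r₁ r₂ : ℝ)
    -- `bᵢ` is a primitive of `G_{xᵢ}` on `⟨g⟩`
    (hb₁ : ∀ m n : ℤ, b₁ m - b₁ (m + n) + b₁ n =
      K (g ^ m) (act (g ^ n) x₁) - K (g ^ m) x₁)
    (hb₂ : ∀ m n : ℤ, b₂ m - b₂ (m + n) + b₂ n =
      K (g ^ m) (act (g ^ n) x₂) - K (g ^ m) x₂)
    -- the local rotation numbers at `x₁` and `x₂`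
    (hr₁ : Filter.Tendsto (fun n : ℕ => b₁ n / n) Filter.atTop (nhds r₁))
    (hr₂ : Filter.Tendsto (fun n : ℕ => b₂ n / n) Filter.atTop (nhds r₂))
    (k₁ k₂ : ℤ) (hk₁ : k₁ ≠ 0) (hk₂ : k₂ ≠ 0) (ρ₁ ρ₂ : ℝ)
    (hrho₁ : r₁ = (k₁ : ℝ) * ρ₁) (hrho₂ : r₂ = (k₂ : ℝ) * ρ₂)
    -- integrality: `q(gⁿ) = n·s + b₁(n) − b₂(n)` for an integer `s`
    (hint : ∃ s : ℤ, ∀ n : ℤ,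
      K (g ^ n) x₂ - K (g ^ n) x₁ = (n : ℝ) * (s : ℝ) + (b₁ n - b₂ n))
    -- `g` is distorted
    (hdist : ∃ S : Finset G, g ∈ Subgroup.closure (S : Set G) ∧
      Filter.Tendsto (fun n : ℕ => (wordLength (S : Set G) (g ^ n) : ℝ) / n)
        Filter.atTop (nhds 0)) :
    ∃ m : ℤ, r₁ - r₂ = (m : ℝ) ∧ (k₁ : ℝ) * ρ₁ - (k₂ : ℝ) * ρ₂ = (m : ℝ) :=
  distorted_implies_equal_local_rotation_numbers_general act K hK g x₁ x₂ b₁ b₂ r₁ r₂ hr₁ hr₂ k₁ k₂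
    ρ₁ ρ₂ hrho₁ hrho₂ hint hdist
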